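/- Let 0 < α < n, 1 < p < n/α, 1/q = 1/p − α/n. If b ∈ BMO(ℝⁿ) with b⁻ ∈ L^∞(ℝⁿ) fails (i.e., b⁻ is unbounded) or b ∉ BMO, then [b,M_α] is not bounded from L^p to L^q; equivalently, if [b,M_α] is bounded from L^p(ℝⁿ) to L^q(ℝⁿ), then sup_Q |Q|^{−1}∫_Q |b(x) − |Q|^{−α/n}M_{α,Q}(b)(x)| dx < ∞. -/

import Mathlib

open MeasureTheory ENNReal Set

noncomputable section

/-- An axis-parallel (closed) cube in `ℝⁿ`. -/
def IsCube (n : ℕ) (Q : Set (Fin n → ℝ)) : Prop :=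
  ∃ (c : Fin n → ℝ) (h : ℝ), 0 < h ∧ Q = Set.univ.pi fun i => Set.Icc (c i) (c i + h)

/-- The fractional maximal function `M_γ f (x) = sup_{Q ∋ x} |Q|^{γ/n-1} ∫_Q |f|`. -/
def fracMax (n : ℕ) (γ : ℝ) (f : (Fin n → ℝ) → ℝ) (x : Fin n → ℝ) : ℝ≥0∞ :=
  ⨆ (Q : Set (Fin n → ℝ)) (_ : IsCube n Q) (_ : x ∈ Q),
    volume Q ^ (γ / n - 1) * ∫⁻ y in Q, ‖f y‖₊

/-- The local fractional maximal function relative to a cube `Q₀`. -/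
def localFracMax (n : ℕ) (γ : ℝ) (Q₀ : Set (Fin n → ℝ)) (f : (Fin n → ℝ) → ℝ)
    (x : Fin n → ℝ) : ℝ≥0∞ :=
  ⨆ (Q : Set (Fin n → ℝ)) (_ : IsCube n Q) (_ : x ∈ Q) (_ : Q ⊆ Q₀),
    volume Q ^ (γ / n - 1) * ∫⁻ y in Q, ‖f y‖₊

/-- The maximal commutator `M_{α,b}`. -/
def maxComm (n : ℕ) (α : ℝ) (b f : (Fin n → ℝ) → ℝ) (x : Fin n → ℝ) : ℝ≥0∞ :=
  ⨆ (Q : Set (Fin n → ℝ)) (_ : IsCube n Q) (_ : x ∈ Q),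
    volume Q ^ (α / n - 1) * ∫⁻ y in Q, (‖b x - b y‖₊ : ℝ≥0∞) * ‖f y‖₊

/-- The nonlinear commutator `[b, M_α](f) = b · M_α(f) - M_α(b f)`. -/
def ncomm (n : ℕ) (α : ℝ) (b f : (Fin n → ℝ) → ℝ) (x : Fin n → ℝ) : ℝ :=
  b x * (fracMax n α f x).toReal - (fracMax n α (fun y => b y * f y) x).toReal

/-- Average of `b` over `Q`. -/
def cubeAvg (n : ℕ) (Q : Set (Fin n → ℝ)) (b : (Fin n → ℝ) → ℝ) : ℝ :=
  (volume Q).toReal⁻¹ * ∫ x in Q, b x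

/-!
Fix a cube `Q` and put `χ = 𝟙_Q`. For `x ∈ Q` one has `M_α χ (x) = |Q|^{α/n}` and
`M_α (b χ) (x) = M_{α,Q} b (x)`: a cube through `x` may be replaced by a subcube of `Q` of no
larger volume containing its intersection with `Q`. Hence
`|b(x) - |Q|^{-α/n} M_{α,Q} b (x)| = |Q|^{-α/n} |[b, M_α] χ (x)|` wherever `M_α (b χ) (x) < ∞`,
which holds almost everywhere by the Lebesgue differentiation theorem. Hölder's inequality on `Q`
and the `L^p → L^q` bound give `∫_Q |[b, M_α] χ| ≤ K |Q|^{1/p} |Q|^{1 - 1/q}`, and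
`1/p - 1/q = α/n` makes the normalised average at most `K`.
-/

open Metric Filter Topology

namespace ENNReal

theorem rpow_le_rpow_of_nonpos {x y : ℝ≥0∞} {z : ℝ} (hxy : x ≤ y) (hz : z ≤ 0) :
    y ^ z ≤ x ^ z := by
  rw [← neg_neg z, rpow_neg y, rpow_neg x]
  exact ENNReal.inv_le_inv.mpr (rpow_le_rpow hxy (neg_nonneg.mpr hz))

theorem rpow_sub_one_mul_self {x : ℝ≥0∞} (hx0 : x ≠ 0) (hx : x ≠ ⊤) (y : ℝ) :
    x ^ (y - 1) * x = x ^ y := by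
  conv_rhs => rw [← sub_add_cancel y 1, rpow_add _ _ hx0 hx, rpow_one]

end ENNReal

theorem EReal.abs_coe_sub_coe_inv_mul (a : ℝ) {V F : ℝ≥0∞} (hV0 : V ≠ 0) (hV : V ≠ ⊤)
    (hF : F ≠ ⊤) :
    ((a : EReal) - ((V⁻¹ * F : ℝ≥0∞) : EReal)).abs = V⁻¹ * ‖a * V.toReal - F.toReal‖₊ := by
  have hVpos : 0 < V.toReal := ENNReal.toReal_pos hV0 hV
  rw [← EReal.coe_ennreal_toReal (ENNReal.mul_ne_top (ENNReal.inv_ne_top.mpr hV0) hF),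
    ← EReal.coe_sub, EReal.abs_def, ENNReal.toReal_mul, ENNReal.toReal_inv,
    show a - V.toReal⁻¹ * F.toReal = V.toReal⁻¹ * (a * V.toReal - F.toReal) by field_simp,
    _root_.abs_mul, abs_inv, abs_of_pos hVpos, ENNReal.ofReal_mul (by positivity),
    ENNReal.ofReal_inv_of_pos hVpos, ENNReal.ofReal_toReal hV, ← Real.enorm_eq_ofReal_abs,
    enorm_eq_nnnorm]

theorem setLIntegral_enorm_le_eLpNorm_mul_rpow {X E : Type*} [MeasurableSpace X]
    {μ : Measure X} [TopologicalSpace E] [ContinuousENorm E] (f : X → E) (S : Set X)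
    {q : ℝ≥0∞} (hq : 1 ≤ q) :
    ∫⁻ x in S, ‖f x‖ₑ ∂μ ≤ eLpNorm f q μ * μ S ^ (1 - 1 / q.toReal) := by
  -- `f` need not be measurable: Hölder is applied to a measurable minorant with the same integral.
  obtain ⟨g, hgm, hgf, hint⟩ := exists_measurable_le_lintegral_eq (μ.restrict S) fun x => ‖f x‖ₑ
  calc ∫⁻ x in S, ‖f x‖ₑ ∂μ = eLpNorm g 1 (μ.restrict S) := by
        rw [hint, eLpNorm_one_eq_lintegral_enorm]
        rfl
    _ ≤ eLpNorm g q (μ.restrict S) * (μ.restrict S) univ ^ (1 / (1 : ℝ≥0∞).toReal - 1 / q.toReal) :=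
        eLpNorm_le_eLpNorm_mul_rpow_measure_univ hq hgm.aestronglyMeasurable
    _ ≤ eLpNorm f q μ * μ S ^ (1 - 1 / q.toReal) := by
        rw [ENNReal.toReal_one, div_one, Measure.restrict_apply_univ]
        gcongr
        exact (eLpNorm_mono_enorm fun x => hgf x).trans
          (eLpNorm_mono_measure f Measure.restrict_le_self)

theorem ae_exists_setLIntegral_closedBall_le {X : Type*} [MetricSpace X] [MeasurableSpace X]
    [BorelSpace X] [SecondCountableTopology X] {μ : Measure X} [IsLocallyFiniteMeasure μ]
    [IsUnifLocDoublingMeasure μ] {f : X → ℝ≥0∞} (hf : AEMeasurable f μ)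
    (hfi : ∫⁻ y, f y ∂μ ≠ ⊤) :
    ∀ᵐ x ∂μ, ∃ A ≠ ⊤, ∃ ε > 0, ∀ r ∈ Ioo 0 ε,
      ∫⁻ y in closedBall x r, f y ∂μ ≤ A * μ (closedBall x r) := by
  filter_upwards [(IsUnifLocDoublingMeasure.vitaliFamily μ 1).ae_tendsto_lintegral_div hf hfi,
    ae_lt_top' hf hfi] with x hx hfx
  have hlim : Tendsto (fun r => (∫⁻ y in closedBall x r, f y ∂μ) / μ (closedBall x r))
      (𝓝[>] 0) (𝓝 (f x)) :=
    hx.comp <| IsUnifLocDoublingMeasure.tendsto_closedBall_filterAt μ (fun _ => x) id tendsto_id <|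
      eventually_mem_nhdsWithin.mono fun r hr => mem_closedBall_self (by simpa using hr.le)
  have hA : f x + 1 ≠ ⊤ := ENNReal.add_ne_top.mpr ⟨hfx.ne, ENNReal.one_ne_top⟩
  obtain ⟨ε, hε, hsub⟩ := mem_nhdsGT_iff_exists_Ioo_subset.mp
    (hlim.eventually (gt_mem_nhds (ENNReal.lt_add_right hfx.ne one_ne_zero)))
  refine ⟨f x + 1, hA, ε, hε, fun r hr => ?_⟩
  exact (ENNReal.div_le_iff_le_mul (Or.inr hA) (Or.inr (by simp))).mp (hsub hr).le

theorem one_lt_of_one_div_eq_one_div_sub {n : ℕ} {α p q : ℝ} (hα0 : 0 < α) (hp1 : 1 < p)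
    (hp2 : p < n / α) (hq : 1 / q = 1 / p - α / n) : 1 < q := by
  have hp0 : 0 < p := by linarith
  have hpα : p * α < n := (lt_div_iff₀ hα0).mp hp2
  have hn : (0 : ℝ) < n := lt_trans (by positivity) hpα
  have hθp : α / n < 1 / p := by
    rw [div_lt_div_iff₀ hn hp0]
    linarith
  have hq0 : 0 < q := one_div_pos.mp (by linarith)
  have : 1 / p < 1 := (div_lt_one hp0).mpr hp1
  exact (div_lt_one hq0).mp (by linarith [div_pos hα0 hn])

section Cubes

variable {n : ℕ}

theorem volume_pi_Icc_add (c : Fin n → ℝ) (h : ℝ) :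
    volume (univ.pi fun i => Icc (c i) (c i + h)) = ENNReal.ofReal h ^ n := by
  simp only [volume_pi_pi, Real.volume_Icc, add_sub_cancel_left, Finset.prod_const,
    Finset.card_univ, Fintype.card_fin]

theorem volume_closedBall_pi (x : Fin n → ℝ) {r : ℝ} (hr : 0 ≤ r) :
    volume (closedBall x r) = 2 ^ n * ENNReal.ofReal r ^ n := by
  rw [Real.volume_pi_closedBall x hr, Fintype.card_fin, ENNReal.ofReal_pow (by positivity),
    ENNReal.ofReal_mul zero_le_two, mul_pow, ENNReal.ofReal_ofNat]

theorem exists_Icc_add_subset_inter (a a' : ℝ) {h h' : ℝ} (hh' : h' ≤ h) :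
    ∃ d, Icc a (a + h) ∩ Icc a' (a' + h') ⊆ Icc d (d + h') ∧ Icc d (d + h') ⊆ Icc a (a + h) := by
  refine ⟨max a (min a' (a + h - h')), ?_, Icc_subset_Icc (le_max_left _ _) ?_⟩
  · rintro y ⟨⟨hay, hya⟩, ⟨hay', hya'⟩⟩
    constructor
    · exact max_le hay (min_le_of_left_le hay')
    · have := le_max_right a (min a' (a + h - h'))
      rcases min_choice a' (a + h - h') with h₁ | h₁ <;> linarith
  · have := max_le (by linarith) (min_le_right a' (a + h - h'))
    linarith

namespace IsCube

variable {Q Q' : Set (Fin n → ℝ)}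

theorem measurableSet (hQ : IsCube n Q) : MeasurableSet Q := by
  obtain ⟨c, h, -, rfl⟩ := hQ
  exact MeasurableSet.univ_pi fun _ => measurableSet_Icc

theorem isCompact (hQ : IsCube n Q) : IsCompact Q := by
  obtain ⟨c, h, -, rfl⟩ := hQ
  exact isCompact_univ_pi fun _ => isCompact_Icc

theorem volume_ne_zero (hQ : IsCube n Q) : volume Q ≠ 0 := by
  obtain ⟨c, h, hh, rfl⟩ := hQ
  rw [volume_pi_Icc_add c h]
  simp [hh]

theorem volume_ne_top (hQ : IsCube n Q) : volume Q ≠ ⊤ := by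
  obtain ⟨c, h, hh, rfl⟩ := hQ
  rw [volume_pi_Icc_add c h]
  simp

theorem exists_subset_closedBall (hQ : IsCube n Q) {x : Fin n → ℝ} (hx : x ∈ Q) :
    ∃ r > 0, Q ⊆ closedBall x r ∧ volume Q = ENNReal.ofReal r ^ n := by
  obtain ⟨c, h, hh, rfl⟩ := hQ
  refine ⟨h, hh, ?_, volume_pi_Icc_add c h⟩
  rw [closedBall_pi x hh.le]
  refine pi_mono fun i _ => ?_
  rw [Real.closedBall_eq_Icc]
  exact Icc_subset_Icc (by linarith [(hx i trivial).2]) (by linarith [(hx i trivial).1])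

theorem exists_subset_inter (hQ : IsCube n Q) (hQ' : IsCube n Q') :
    ∃ Q'', IsCube n Q'' ∧ Q ∩ Q' ⊆ Q'' ∧ Q'' ⊆ Q ∧ volume Q'' ≤ volume Q' := by
  obtain ⟨c, h, hh, rfl⟩ := hQ
  obtain ⟨c', h', hh', rfl⟩ := hQ'
  rcases le_total h h' with hle | hle
  · refine ⟨_, ⟨c, h, hh, rfl⟩, inter_subset_left, subset_rfl, ?_⟩
    rw [volume_pi_Icc_add, volume_pi_Icc_add]
    gcongr
  · choose d hd using fun i => exists_Icc_add_subset_inter (c i) (c' i) hle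
    refine ⟨_, ⟨d, h', hh', rfl⟩, ?_, pi_mono fun i _ => (hd i).2, ?_⟩
    · rw [← pi_inter_distrib]
      exact pi_mono fun i _ => (hd i).1
    · rw [volume_pi_Icc_add, volume_pi_Icc_add]

end IsCube

end Cubes

section MaximalFunctions

variable {n : ℕ} {α : ℝ} {Q : Set (Fin n → ℝ)} {x : Fin n → ℝ}

theorem setLIntegral_nnnorm_mul_indicator_one (hQ : MeasurableSet Q)
    (b : (Fin n → ℝ) → ℝ) (S : Set (Fin n → ℝ)) :
    ∫⁻ y in S, ‖b y * Q.indicator (fun _ => (1 : ℝ)) y‖₊ = ∫⁻ y in Q ∩ S, ‖b y‖₊ := by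
  have : (fun y => (‖b y * Q.indicator (fun _ => (1 : ℝ)) y‖₊ : ℝ≥0∞)) =
      Q.indicator fun y => (‖b y‖₊ : ℝ≥0∞) := by
    ext y
    by_cases hy : y ∈ Q <;> simp [hy]
  rw [this, lintegral_indicator hQ, Measure.restrict_restrict hQ]

theorem fracMax_mul_indicator_one (hαn : α ≤ n) (hQ : IsCube n Q) (hx : x ∈ Q)
    (b : (Fin n → ℝ) → ℝ) :
    fracMax n α (fun y => b y * Q.indicator (fun _ => (1 : ℝ)) y) x = localFracMax n α Q b x := by
  have hexp : α / n - 1 ≤ 0 := sub_nonpos.mpr (div_le_one_of_le₀ hαn (Nat.cast_nonneg n))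
  apply le_antisymm
  · refine iSup_le fun Q' => iSup₂_le fun hQ' hxQ' => ?_
    obtain ⟨Q'', hQ'', hsub, hQ''Q, hvol⟩ := hQ.exists_subset_inter hQ'
    dsimp only
    rw [setLIntegral_nnnorm_mul_indicator_one hQ.measurableSet]
    calc volume Q' ^ (α / n - 1) * ∫⁻ y in Q ∩ Q', ‖b y‖₊
        ≤ volume Q'' ^ (α / n - 1) * ∫⁻ y in Q'', ‖b y‖₊ :=
          mul_le_mul' (ENNReal.rpow_le_rpow_of_nonpos hvol hexp) (lintegral_mono_set hsub)
      _ ≤ localFracMax n α Q b x :=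
          le_iSup_of_le Q'' <| le_iSup_of_le hQ'' <| le_iSup_of_le (hsub ⟨hx, hxQ'⟩) <|
            le_iSup_of_le hQ''Q le_rfl
  · refine iSup₂_le fun Q' hQ' => iSup₂_le fun hxQ' hQ'Q => ?_
    refine le_iSup_of_le Q' <| le_iSup_of_le hQ' <| le_iSup_of_le hxQ' ?_
    dsimp only
    rw [setLIntegral_nnnorm_mul_indicator_one hQ.measurableSet, inter_eq_right.mpr hQ'Q]

theorem localFracMax_one (hα0 : 0 ≤ α) (hQ : IsCube n Q) (hx : x ∈ Q) :
    localFracMax n α Q (fun _ => 1) x = volume Q ^ (α / n) := by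
  have key : ∀ Q', IsCube n Q' → volume Q' ^ (α / n - 1) * ∫⁻ _ in Q', ‖(1 : ℝ)‖₊
      = volume Q' ^ (α / n) := fun Q' hQ' => by
    rw [nnnorm_one, ENNReal.coe_one, setLIntegral_one,
      ENNReal.rpow_sub_one_mul_self hQ'.volume_ne_zero hQ'.volume_ne_top]
  apply le_antisymm
  · refine iSup₂_le fun Q' hQ' => iSup₂_le fun _ hQ'Q => ?_
    rw [key Q' hQ']
    exact ENNReal.rpow_le_rpow (measure_mono hQ'Q) (by positivity)
  · exact le_iSup_of_le Q <| le_iSup_of_le hQ <| le_iSup_of_le hx <|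
      le_iSup_of_le subset_rfl (key Q hQ).ge

theorem fracMax_indicator_one (hα0 : 0 ≤ α) (hαn : α ≤ n) (hQ : IsCube n Q) (hx : x ∈ Q) :
    fracMax n α (Q.indicator fun _ => (1 : ℝ)) x = volume Q ^ (α / n) := by
  have := fracMax_mul_indicator_one hαn hQ hx fun _ => 1
  simp only [one_mul] at this
  rw [this, localFracMax_one hα0 hQ hx]

theorem fracMax_lt_top_of_setLIntegral_closedBall_le (hα0 : 0 ≤ α) (hαn : α ≤ n)
    {g : (Fin n → ℝ) → ℝ} (hg : ∫⁻ y, ‖g y‖₊ ≠ ⊤) {A : ℝ≥0∞} (hA : A ≠ ⊤) {ε : ℝ} (hε : 0 < ε)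
    (hball : ∀ r ∈ Ioo 0 ε, ∫⁻ y in closedBall x r, ‖g y‖₊ ≤ A * volume (closedBall x r)) :
    fracMax n α g x < ⊤ := by
  have hexp : α / n - 1 ≤ 0 := sub_nonpos.mpr (div_le_one_of_le₀ hαn (Nat.cast_nonneg n))
  set V := ENNReal.ofReal ε ^ n with hV
  have hV0 : V ≠ 0 := by simp [V, hε]
  have hVt : V ≠ ⊤ := by simp [V]
  -- Cubes of side `≥ ε` are controlled by `‖g‖₁`, smaller ones by the ball averages at `x`.
  refine lt_of_le_of_lt (b := max (V ^ (α / n - 1) * ∫⁻ y, ‖g y‖₊) (2 ^ n * A * V ^ (α / n)))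
    ?_ (max_lt ?_ ?_)
  · refine iSup_le fun Q => iSup₂_le fun hQ hxQ => ?_
    obtain ⟨r, hr, hQB, hvolQ⟩ := hQ.exists_subset_closedBall hxQ
    rcases lt_or_ge r ε with hlt | hle
    · refine le_max_of_le_right ?_
      calc _ ≤ volume Q ^ (α / n - 1) * (A * (2 ^ n * volume Q)) := by
            gcongr
            calc ∫⁻ y in Q, ‖g y‖₊ ≤ ∫⁻ y in closedBall x r, ‖g y‖₊ := lintegral_mono_set hQB
              _ ≤ A * volume (closedBall x r) := hball r ⟨hr, hlt⟩
              _ = A * (2 ^ n * volume Q) := by rw [volume_closedBall_pi x hr.le, hvolQ]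
        _ = 2 ^ n * A * (volume Q ^ (α / n - 1) * volume Q) := by ring
        _ ≤ 2 ^ n * A * V ^ (α / n) := by
            rw [ENNReal.rpow_sub_one_mul_self hQ.volume_ne_zero hQ.volume_ne_top, hvolQ, hV]
            gcongr
    · refine le_max_of_le_left (mul_le_mul' (ENNReal.rpow_le_rpow_of_nonpos ?_ hexp)
        (setLIntegral_le_lintegral _ _))
      rw [hvolQ, hV]
      gcongr
  · exact ENNReal.mul_lt_top (ENNReal.rpow_ne_top_of_ne_zero hV0 hVt).lt_top hg.lt_top
  · exact ENNReal.mul_lt_top (by finiteness) (ENNReal.rpow_ne_top_of_ne_zero hV0 hVt).lt_top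

theorem ae_fracMax_lt_top (hα0 : 0 ≤ α) (hαn : α ≤ n) {g : (Fin n → ℝ) → ℝ}
    (hg : Integrable g) : ∀ᵐ x, fracMax n α g x < ⊤ := by
  filter_upwards [ae_exists_setLIntegral_closedBall_le hg.aemeasurable.enorm hg.2.ne]
    with x ⟨A, hA, ε, hε, hball⟩
  exact fracMax_lt_top_of_setLIntegral_closedBall_le hα0 hαn hg.2.ne hA hε hball

end MaximalFunctions

section Commutator

variable {n : ℕ} {α : ℝ} {Q : Set (Fin n → ℝ)} {b : (Fin n → ℝ) → ℝ}

theorem setLIntegral_abs_sub_localFracMax (hα0 : 0 ≤ α) (hαn : α ≤ n) (hQ : IsCube n Q)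
    (hb : IntegrableOn b Q) :
    ∫⁻ x in Q, ((b x : EReal) -
        ((volume Q ^ (-(α / (n : ℝ))) * localFracMax n α Q b x : ℝ≥0∞) : EReal)).abs
      = (volume Q ^ (α / n))⁻¹ * ∫⁻ x in Q, ‖ncomm n α b (Q.indicator fun _ => (1 : ℝ)) x‖₊ := by
  have hV0 : volume Q ^ (α / n) ≠ 0 :=
    (ENNReal.rpow_pos (pos_iff_ne_zero.mpr hQ.volume_ne_zero) hQ.volume_ne_top).ne'
  have hV : volume Q ^ (α / n) ≠ ⊤ :=
    ENNReal.rpow_ne_top_of_ne_zero hQ.volume_ne_zero hQ.volume_ne_top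
  have hbχ : Integrable fun y => b y * Q.indicator (fun _ => (1 : ℝ)) y := by
    have : (fun y => b y * Q.indicator (fun _ => (1 : ℝ)) y) = Q.indicator b := by
      ext y
      by_cases hy : y ∈ Q <;> simp [hy]
    exact this ▸ hb.integrable_indicator hQ.measurableSet
  rw [← lintegral_const_mul' _ _ (ENNReal.inv_ne_top.mpr hV0)]
  refine lintegral_congr_ae ?_
  -- Where `M_α (b χ) x = ∞`, `ncomm` only sees the junk value `ENNReal.toReal ⊤ = 0`.
  filter_upwards [ae_restrict_of_ae (ae_fracMax_lt_top hα0 hαn hbχ),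
    ae_restrict_mem hQ.measurableSet] with x hfin hx
  rw [ENNReal.rpow_neg, ← fracMax_mul_indicator_one hαn hQ hx b,
    EReal.abs_coe_sub_coe_inv_mul _ hV0 hV hfin.ne, ncomm, fracMax_indicator_one hα0 hαn hQ hx]

theorem inv_volume_mul_setLIntegral_abs_sub_localFracMax_le {p q : ℝ} (hα0 : 0 ≤ α)
    (hαn : α ≤ n) (hp0 : 0 < p) (hq1 : 1 ≤ q) (hq : 1 / q = 1 / p - α / n) (hQ : IsCube n Q)
    (hb : IntegrableOn b Q) {K : ℝ≥0∞}
    (hK : eLpNorm (fun x => ncomm n α b (Q.indicator fun _ => (1 : ℝ)) x) (ENNReal.ofReal q) volume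
      ≤ K * eLpNorm (Q.indicator fun _ => (1 : ℝ)) (ENNReal.ofReal p) volume) :
    (volume Q)⁻¹ * ∫⁻ x in Q, ((b x : EReal) -
        ((volume Q ^ (-(α / (n : ℝ))) * localFracMax n α Q b x : ℝ≥0∞) : EReal)).abs ≤ K := by
  have hχ : eLpNorm (Q.indicator fun _ => (1 : ℝ)) (ENNReal.ofReal p) volume
      = volume Q ^ (1 / p) := by
    rw [eLpNorm_indicator_const hQ.measurableSet (by simpa using hp0) ENNReal.ofReal_ne_top,
      ENNReal.toReal_ofReal hp0.le, enorm_one, one_mul]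
  have hHolder := setLIntegral_enorm_le_eLpNorm_mul_rpow (μ := volume)
    (fun x => ncomm n α b (Q.indicator fun _ => (1 : ℝ)) x) Q (ENNReal.one_le_ofReal.mpr hq1)
  rw [ENNReal.toReal_ofReal (by linarith)] at hHolder
  rw [setLIntegral_abs_sub_localFracMax hα0 hαn hQ hb]
  calc _ ≤ (volume Q)⁻¹ * ((volume Q ^ (α / n))⁻¹ *
        (K * volume Q ^ (1 / p) * volume Q ^ (1 - 1 / q))) := by
        gcongr
        exact hHolder.trans (mul_le_mul' (hK.trans_eq (by rw [hχ])) le_rfl)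
    _ = K * volume Q ^ (-1 + -(α / n) + 1 / p + (1 - 1 / q)) := by
        simp only [ENNReal.rpow_add _ _ hQ.volume_ne_zero hQ.volume_ne_top, ENNReal.rpow_neg,
          ENNReal.rpow_one]
        ring
    _ = K := by
        rw [show -1 + -(α / n) + 1 / p + (1 - 1 / q) = 0 by linarith, ENNReal.rpow_zero, mul_one]

end Commutator

theorem stmt19 (n : ℕ) (α p q : ℝ) (hα0 : 0 < α) (hαn : α < n)
    (hp1 : 1 < p) (hp2 : p < n / α) (hq : 1 / q = 1 / p - α / n)
    (b : (Fin n → ℝ) → ℝ) (hb : LocallyIntegrable b volume)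
    (hbound : ∃ K : ℝ≥0∞, K ≠ ⊤ ∧ ∀ f : (Fin n → ℝ) → ℝ,
      MemLp f (ENNReal.ofReal p) volume →
      eLpNorm (fun x => ncomm n α b f x) (ENNReal.ofReal q) volume
        ≤ K * eLpNorm f (ENNReal.ofReal p) volume) :
    ∃ C : ℝ≥0∞, C ≠ ⊤ ∧ ∀ Q : Set (Fin n → ℝ), IsCube n Q →
      (volume Q)⁻¹ *
        ∫⁻ x in Q, ((b x : EReal) -
          ((volume Q ^ (-(α / (n : ℝ))) * localFracMax n α Q b x : ℝ≥0∞) : EReal)).abs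
      ≤ C := by
  obtain ⟨K, hK, hKb⟩ := hbound
  have hq1 : 1 < q := one_lt_of_one_div_eq_one_div_sub hα0 hp1 hp2 hq
  refine ⟨K, hK, fun Q hQ => ?_⟩
  exact inv_volume_mul_setLIntegral_abs_sub_localFracMax_le hα0.le hαn.le (by linarith) hq1.le hq
    hQ (hb.integrableOn_isCompact hQ.isCompact)
    (hKb _ (memLp_indicator_const _ hQ.measurableSet 1 (Or.inr hQ.volume_ne_top)))
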